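/- For n = 3m+2 and x ∈ {0,1}^n, let f_i = x_i for 1 ≤ i ≤ m+2, and for 1 ≤ i ≤ m+3 let g_i = [∑_{j=m+3}^{n} x_j ≥ ⌈m/2 - 1⌉ + i - 1]. Then the majority of these 2m+5 gate values equals MAJ_n(x), i.e., [∑_{i=1}^{m+2} x_i + ∑_{i=1}^{m+3} g_i ≥ (2m+5)/2] = [∑_{j=1}^{n} x_j ≥ n/2]. -/

import Mathlib

/-!
With `A` the number of ones among `x₁, …, x_{m+2}` and `B` the number among the remaining
`2m` inputs, the threshold gates `g_i` fire exactly for `i ≤ B - ⌈m/2 - 1⌉ + 1`, so their number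
is `min (m + 3) (B - ⌈m/2⌉ + 2)`. Since `A ≤ m + 2` and `B ≤ 2m`, comparing
`A + min (m + 3) (B - ⌈m/2⌉ + 2) ≥ m + 3` with `A + B ≥ ⌈(3m + 2)/2⌉` is then linear arithmetic.
-/

open Finset

lemma sum_boole_le_card {ι : Type*} (s : Finset ι) (p : ι → Bool) :
    ∑ i ∈ s, (if p i then 1 else 0 : ℕ) ≤ #s := by
  simpa using card_filter_le s (fun i => p i = true)

lemma sum_Icc_one_add_sum_Icc {M : Type*} [AddCommMonoid M] (f : ℕ → M) {a b : ℕ}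
    (hab : a ≤ b) : ∑ i ∈ Icc 1 a, f i + ∑ i ∈ Icc (a + 1) b, f i = ∑ i ∈ Icc 1 b, f i := by
  have hIcc (c : ℕ) : Icc 1 c = Ioc 0 c := Icc_add_one_left_eq_Ioc 0 c
  rw [hIcc, hIcc, Icc_add_one_left_eq_Ioc, sum_Ioc_consecutive f (Nat.zero_le a) hab]

lemma sum_Icc_ite_ge_eq_min (N : ℕ) (s c : ℤ) :
    ∑ i ∈ Icc 1 N, (if s ≥ c + i - 1 then 1 else 0 : ℕ) = min N (s - c + 1).toNat := by
  induction N with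
  | zero => simp
  | succ N ih =>
    rw [sum_Icc_succ_top (by omega), ih]
    split_ifs with h <;> push_cast at h <;> omega

lemma ceil_natCast_div_two_sub_one (m : ℕ) : ⌈(m : ℚ) / 2 - 1⌉ = -(-(m : ℤ) / 2) - 1 := by
  rw [Int.ceil_sub_one]
  exact_mod_cast congrArg (· - 1) (Rat.ceil_natCast_div_natCast m 2)

lemma natCast_div_two_le_natCast_iff {K : Type*} [Field K] [LinearOrder K]
    [IsStrictOrderedRing K] (a b : ℕ) : (a : K) / 2 ≤ b ↔ a ≤ 2 * b := by
  rw [div_le_iff₀ two_pos, mul_comm]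
  exact_mod_cast Iff.rfl

/-- Case `n = 3m + 2` of the depth-two majority circuit.
Gates: `f_i = x_i` for `1 ≤ i ≤ m+2`, and `g_i = [sum_M(x) ≥ ⌈m/2 - 1⌉ + i - 1]`
for `1 ≤ i ≤ m+3`, where `M = {m+3, …, n}`.  The majority of these `2m+5` gate
values equals `MAJ_n(x)`. -/
theorem maj_circuit_case_mod2 (n m : ℕ) (hn : n = 3 * m + 2) (x : ℕ → Bool) :
    (((∑ i ∈ Finset.Icc 1 (m + 2), (if x i then 1 else 0)) +
        ∑ i ∈ Finset.Icc 1 (m + 3),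
          (if ((∑ j ∈ Finset.Icc (m + 3) n, (if x j then 1 else 0) : ℕ) : ℤ) ≥
              ⌈(m : ℚ) / 2 - 1⌉ + i - 1 then 1 else 0) : ℕ) : ℚ) ≥
        (2 * (m : ℚ) + 5) / 2 ↔
      ((∑ j ∈ Finset.Icc 1 n, (if x j then 1 else 0) : ℕ) : ℚ) ≥ (n : ℚ) / 2 := by
  subst hn
  set A := ∑ i ∈ Icc 1 (m + 2), (if x i then 1 else 0)
  set B := ∑ j ∈ Icc (m + 3) (3 * m + 2), (if x j then 1 else 0)
  have hA : A ≤ m + 2 := (sum_boole_le_card _ x).trans (by simp)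
  have hB : B ≤ 2 * m := (sum_boole_le_card _ x).trans (by rw [Nat.card_Icc]; omega)
  have hsplit : ∑ j ∈ Icc 1 (3 * m + 2), (if x j then 1 else 0) = A + B :=
    (sum_Icc_one_add_sum_Icc _ (by omega)).symm
  rw [ge_iff_le, ge_iff_le, show 2 * (m : ℚ) + 5 = ((2 * m + 5 : ℕ) : ℚ) by push_cast; ring,
    natCast_div_two_le_natCast_iff, natCast_div_two_le_natCast_iff, hsplit,
    sum_Icc_ite_ge_eq_min, ceil_natCast_div_two_sub_one]
  omega
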